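/- Let p be prime and (A_p, f) the affine connected quandle of order p with n the order of t mod p. The number of orbits of Inn(A_p) acting diagonally on A_p × A_p equals 1 + (p-1)/n. (Equivalently, the canonical tensor product A_p ⊗ A_p has cardinality 1 + (p-1)/n.) -/

import Mathlib

/-!
The group generated by the maps `x ↦ t x + (1 - t) j` is exactly the group of affine maps
`x ↦ t^k x + b`: the scaling `x ↦ t x` is a generator, and since `1 - t` is invertible every
translation is a generator composed with its inverse. Such a map multiplies the difference
`y - x` of a pair by `t^k`, and any pair can be moved to any other pair whose difference is
`⟨t⟩`-related. So the diagonal orbits correspond to the orbits of `⟨t⟩` on `ZMod p`, namely `{0}`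
and the `(p - 1) / n` cosets of `⟨t⟩` in `(ZMod p)ˣ`.
-/

open MulAction Subgroup

section Affine

variable {R : Type*} [CommRing R]

def affineSubgroup (H : Subgroup Rˣ) : Subgroup (Equiv.Perm R) where
  carrier := {σ | ∃ a ∈ H, ∃ b, ∀ x, σ x = a * x + b}
  one_mem' := ⟨1, H.one_mem, 0, fun x => by simp⟩
  mul_mem' := by
    rintro σ τ ⟨a, ha, b, hσ⟩ ⟨a', ha', b', hτ⟩
    refine ⟨a * a', H.mul_mem ha ha', a * b' + b, fun x => ?_⟩
    simp only [Equiv.Perm.mul_apply, hσ, hτ, Units.val_mul]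
    ring
  inv_mem' := by
    rintro σ ⟨a, ha, b, hσ⟩
    refine ⟨a⁻¹, H.inv_mem ha, -(↑a⁻¹ * b), fun x => ?_⟩
    obtain ⟨y, rfl⟩ := σ.surjective x
    rw [Equiv.Perm.inv_def, Equiv.symm_apply_apply, hσ, mul_add, ← mul_assoc, Units.inv_mul,
      one_mul, add_neg_cancel_right]

theorem orbitRel_affineSubgroup_iff (H : Subgroup Rˣ) (z w : R × R) :
    orbitRel (affineSubgroup H) (R × R) z w ↔ orbitRel H R (z.2 - z.1) (w.2 - w.1) := by
  constructor
  · rintro ⟨⟨σ, a, ha, b, hσ⟩, rfl⟩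
    refine ⟨⟨a, ha⟩, ?_⟩
    change (a : R) * (w.2 - w.1) = σ w.2 - σ w.1
    rw [hσ, hσ]
    ring
  · rintro ⟨⟨a, ha⟩, hzw⟩
    change (a : R) * (w.2 - w.1) = z.2 - z.1 at hzw
    refine ⟨⟨Equiv.addRight (z.1 - a * w.1) * toPermHom Rˣ R a, a, ha, _, fun _ => rfl⟩, ?_⟩
    ext
    · change (a : R) * w.1 + (z.1 - a * w.1) = z.1
      ring
    · change (a : R) * w.2 + (z.1 - a * w.1) = z.2
      linear_combination hzw

noncomputable def affineSubgroupDiagonalOrbitsEquiv (H : Subgroup Rˣ) :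
    orbitRel.Quotient (affineSubgroup H) (R × R) ≃ orbitRel.Quotient H R :=
  (Quotient.congrRight fun z w =>
      (orbitRel_affineSubgroup_iff H z w).trans Quotient.eq.symm).trans
    (Setoid.quotientKerEquivOfSurjective (fun z : R × R => (⟦z.2 - z.1⟧ : orbitRel.Quotient H R))
      fun q => q.inductionOn fun x => ⟨(0, x), congrArg _ (sub_zero x)⟩)

end Affine

section Units

variable {K : Type*} [CommGroupWithZero K] (H : Subgroup Kˣ)

theorem orbitRel_units_coe_iff {a b : Kˣ} : orbitRel H K a b ↔ (a : Kˣ ⧸ H) = b := by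
  rw [QuotientGroup.eq, orbitRel_apply, mem_orbit_iff]
  constructor
  · rintro ⟨⟨h, hh⟩, hab⟩
    obtain rfl : h * b = a := Units.ext hab
    simpa using inv_mem hh
  · intro hab
    refine ⟨⟨(a⁻¹ * b)⁻¹, inv_mem hab⟩, ?_⟩
    change (((a⁻¹ * b)⁻¹ * b : Kˣ) : K) = a
    simp

theorem not_orbitRel_zero_units_coe (a : Kˣ) : ¬ orbitRel H K 0 a := by
  rintro ⟨h, hh⟩
  exact (h * a).ne_zero hh

noncomputable def optionQuotientEquivOrbitRelQuotient :
    Option (Kˣ ⧸ H) ≃ orbitRel.Quotient H K :=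
  Equiv.ofBijective
    (fun o => o.elim ⟦0⟧ (Quotient.lift (fun a : Kˣ => (⟦(a : K)⟧ : orbitRel.Quotient H K))
      fun _ _ hab => Quotient.sound ((orbitRel_units_coe_iff H).2 (Quotient.sound hab))))
    (by
      constructor
      · rintro (_ | q) (_ | q') h
        · rfl
        · induction q' using Quotient.inductionOn
          exact (not_orbitRel_zero_units_coe H _ (Quotient.exact h)).elim
        · induction q using Quotient.inductionOn
          exact (not_orbitRel_zero_units_coe H _ (Quotient.exact h.symm)).elim
        · induction q using Quotient.inductionOn
          induction q' using Quotient.inductionOn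
          exact congrArg some ((orbitRel_units_coe_iff H).1 (Quotient.exact h))
      · intro q
        induction q using Quotient.inductionOn with | h x => ?_
        by_cases hx : x = 0
        · exact ⟨none, by rw [hx]; rfl⟩
        · exact ⟨some (Units.mk0 x hx : Kˣ ⧸ H), rfl⟩)

theorem card_orbitRelQuotient_zpowers [Finite K] (u : Kˣ) :
    Nat.card (orbitRel.Quotient (zpowers u) K) = 1 + (Nat.card K - 1) / orderOf u := by
  rw [← Nat.card_congr (optionQuotientEquivOrbitRelQuotient _), Finite.card_option,
    ← Nat.card_units, Subgroup.card_eq_card_quotient_mul_card_subgroup (zpowers u),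
    Nat.card_zpowers, Nat.mul_div_cancel _ (orderOf_pos u), add_comm]

end Units

theorem closure_homothety_eq_affineSubgroup {K : Type*} [Field K] {t : K} (ht0 : t ≠ 0)
    (ht1 : t ≠ 1) :
    closure {σ : Equiv.Perm K | ∃ j, ∀ x, σ x = t * x + (1 - t) * j} =
      affineSubgroup (zpowers (Units.mk0 t ht0)) := by
  set u := Units.mk0 t ht0
  apply le_antisymm
  · rw [closure_le]
    rintro σ ⟨j, hσ⟩
    exact ⟨u, mem_zpowers u, (1 - t) * j, hσ⟩
  · rintro σ ⟨a, ⟨k, rfl⟩, b, hσ⟩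
    have hgen (c : K) : Equiv.addRight c * toPermHom Kˣ K u ∈
        closure {σ : Equiv.Perm K | ∃ j, ∀ x, σ x = t * x + (1 - t) * j} := by
      refine subset_closure ⟨c / (1 - t), fun x => ?_⟩
      rw [mul_div_cancel₀ _ (sub_ne_zero.2 ht1.symm)]
      rfl
    have hscale := hgen 0
    rw [Equiv.addRight_zero, one_mul] at hscale
    have hσ_eq : σ = Equiv.addRight b * toPermHom Kˣ K u * (toPermHom Kˣ K u)⁻¹ *
        toPermHom Kˣ K u ^ k := by
      rw [mul_inv_cancel_right, ← map_zpow]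
      ext x
      exact hσ x
    rw [hσ_eq]
    exact mul_mem (mul_mem (hgen b) (inv_mem hscale)) (zpow_mem hscale k)

/-- For `p` prime and the affine connected quandle `(A_p, f)` with `t` of
order `n` mod `p`, the number of orbits of `Inn(A_p)` (the group of permutations of `Z_p`
generated by the right translations `R_j : x ↦ t*x + (1-t)*j`) acting diagonally on
`A_p × A_p` equals `1 + (p-1)/n`; equivalently `|A_p ⊗ A_p| = 1 + (p-1)/n`. -/
theorem stmt15 (p n : ℕ) (hp : p.Prime) (t : ZMod p) (ht0 : t ≠ 0) (ht1 : t ≠ 1)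
    (horder : orderOf t = n)
    (Inn : Subgroup (Equiv.Perm (ZMod p)))
    (hInn : Inn = Subgroup.closure
      {σ : Equiv.Perm (ZMod p) | ∃ j : ZMod p, ∀ x, σ x = t * x + (1 - t) * j}) :
    Nat.card (MulAction.orbitRel.Quotient Inn (ZMod p × ZMod p)) = 1 + (p - 1) / n := by
  have : Fact p.Prime := ⟨hp⟩
  rw [hInn, closure_homothety_eq_affineSubgroup ht0 ht1,
    Nat.card_congr (affineSubgroupDiagonalOrbitsEquiv _), card_orbitRelQuotient_zpowers,
    Nat.card_zmod, ← orderOf_units, Units.val_mk0, horder]
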